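/- arXiv:math/0306299 — 4 statements merged into one kernel-verified Lean document; each statement's English description precedes it below -/
import Mathlib

section
/- Let A be a radial subset of ℝ^m not containing 0, let Y ⊆ ℝ^n with inf{‖y‖ : y ∈ Y} > 0, and let f : A → Y be continuous. Define the map Φ from the mapping cylinder of f to ℝ^m × ℝ^n by Φ(x,t) = (x, (2t) • f(x)) for t ∈ [0,1/2] and Φ(x,t) = ((2 - 2t) • x, f(x)) for t ∈ [1/2,1], for x ∈ A, together with Φ(y) = (0, y) for y ∈ Y. Then Φ is injective. -/
/-- A subset `S` of a real normed space is *radial* if for every `s ∈ S`,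
the segment `[0, s]` meets `S` exactly in `s`. -/
def IsRadial {E : Type*} [NormedAddCommGroup E] [NormedSpace ℝ E] (S : Set E) : Prop :=
  ∀ s ∈ S, segment ℝ 0 s ∩ S = {s}

/-- The piecewise-linear parametrization of the mapping cylinder of `f` inside
`ℝ^m × ℝ^n`: for `t ∈ [0, 1/2]` it is `(x, (2t) • f x)`, and for `t ∈ [1/2, 1]`
it is `((2 - 2t) • x, f x)`.  (Points of `Y` are embedded as `(0, y)`.) -/
noncomputable def cylMap {m n : ℕ}
    (f : EuclideanSpace ℝ (Fin m) → EuclideanSpace ℝ (Fin n))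
    (x : EuclideanSpace ℝ (Fin m)) (t : ℝ) :
    EuclideanSpace ℝ (Fin m) × EuclideanSpace ℝ (Fin n) :=
  if t ≤ 1 / 2 then (x, (2 * t) • f x) else ((2 - 2 * t) • x, f x)

/-- If `A ⊆ ℝ^m` is radial with `0 ∉ A`, `Y ⊆ ℝ^n` is uniformly far from the
origin, and `f : A → Y` is continuous, then the piecewise-linear parametrization
of the mapping cylinder of `f` (together with `y ↦ (0, y)` on `Y`) is injective:
points `(x,t)` and `(x',t')` of `A × [0,1]` have the same image only if they are
equal or both are identified with the same point of `Y` (i.e. `t = t' = 1` and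
`f x = f x'`), and `(x,t)` maps to `(0, y)` with `y ∈ Y` only if `t = 1` and
`y = f x`. -/
theorem cylMap_injective {m n : ℕ}
    (A : Set (EuclideanSpace ℝ (Fin m))) (Y : Set (EuclideanSpace ℝ (Fin n)))
    (f : EuclideanSpace ℝ (Fin m) → EuclideanSpace ℝ (Fin n))
    (hmaps : Set.MapsTo f A Y) (hcont : ContinuousOn f A)
    (hrad : IsRadial A) (h0A : (0 : EuclideanSpace ℝ (Fin m)) ∉ A)
    (R : ℝ) (hR : 0 < R) (hY : ∀ y ∈ Y, R < ‖y‖) :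
    (∀ x ∈ A, ∀ x' ∈ A, ∀ t ∈ Set.Icc (0 : ℝ) 1, ∀ t' ∈ Set.Icc (0 : ℝ) 1,
        cylMap f x t = cylMap f x' t' →
          (x = x' ∧ t = t') ∨ (t = 1 ∧ t' = 1 ∧ f x = f x')) ∧
    (∀ x ∈ A, ∀ t ∈ Set.Icc (0 : ℝ) 1, ∀ y ∈ Y,
        cylMap f x t = (0, y) → t = 1 ∧ f x = y) := by
  have hA0 : ∀ x ∈ A, x ≠ (0 : EuclideanSpace ℝ (Fin m)) := by
    intro x hx h; exact h0A (h ▸ hx)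
  have hf0 : ∀ x ∈ A, f x ≠ 0 := by
    intro x hx h
    have := hY _ (hmaps hx)
    rw [h, norm_zero] at this; linarith
  have hseg : ∀ x ∈ A, ∀ x' ∈ A, ∀ c : ℝ, 0 ≤ c → c ≤ 1 → x = c • x' → x = x' := by
    intro x hx x' hx' c hc0 hc1 hxc
    have hmem : x ∈ segment ℝ (0 : EuclideanSpace ℝ (Fin m)) x' :=
      ⟨1 - c, c, by linarith, hc0, by ring, by simp [hxc]⟩
    have h1 := hrad x' hx'
    have h2 : x ∈ ({x'} : Set (EuclideanSpace ℝ (Fin m))) := h1 ▸ ⟨hmem, hx⟩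
    simpa using h2
  constructor
  · intro x hx x' hx' t ht t' ht' heq
    unfold cylMap at heq
    by_cases h1 : t ≤ 1/2 <;> by_cases h2 : t' ≤ 1/2
    all_goals first
      | rw [if_pos h1, if_pos h2, Prod.mk.injEq] at heq
      | rw [if_pos h1, if_neg h2, Prod.mk.injEq] at heq
      | rw [if_neg h1, if_pos h2, Prod.mk.injEq] at heq
      | rw [if_neg h1, if_neg h2, Prod.mk.injEq] at heq
    all_goals obtain ⟨e1, e2⟩ := heq
    · subst e1
      left
      refine ⟨rfl, ?_⟩
      have h3 : ((2*t) - (2*t')) • f x = 0 := by rw [sub_smul, e2, sub_self]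
      rcases smul_eq_zero.mp h3 with h | h
      · linarith [sub_eq_zero.mp h]
      · exact absurd h (hf0 x hx)
    · -- t ≤ 1/2 < t' : impossible
      exfalso
      have hxx : x = x' := hseg x hx x' hx' (2 - 2*t') (by linarith [ht'.2]) (by linarith) e1
      rw [hxx] at e1
      have h3 : ((1:ℝ) - (2 - 2*t')) • x' = 0 := by
        rw [sub_smul, one_smul]; rw [← e1]; simp
      rcases smul_eq_zero.mp h3 with h | h
      · have := sub_eq_zero.mp h; linarith
      · exact hA0 x' hx' h
    · -- t' ≤ 1/2 < t : impossible
      exfalso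
      have hxx : x' = x := hseg x' hx' x hx (2 - 2*t) (by linarith [ht.2]) (by linarith) e1.symm
      rw [hxx] at e1
      have h3 : ((1:ℝ) - (2 - 2*t)) • x = 0 := by
        rw [sub_smul, one_smul]; rw [e1]; simp
      rcases smul_eq_zero.mp h3 with h | h
      · have := sub_eq_zero.mp h; linarith
      · exact hA0 x hx h
    · -- both > 1/2
      by_cases htt : t = 1
      · subst htt
        have h0 : ((2:ℝ) - 2*1) • x = 0 := by norm_num
        rw [h0] at e1
        rcases smul_eq_zero.mp e1.symm with h | h
        · right; refine ⟨rfl, by linarith, e2⟩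
        · exact absurd h (hA0 x' hx')
      · have hat : (0:ℝ) < 2 - 2*t := by
          rcases lt_or_eq_of_le ht.2 with h | h
          · linarith
          · exact absurd h htt
        by_cases htt' : t' = 1
        · exfalso
          subst htt'
          have h0 : ((2:ℝ) - 2*1) • x' = 0 := by norm_num
          rw [h0] at e1
          rcases smul_eq_zero.mp e1 with h | h
          · linarith
          · exact hA0 x hx h
        · have hat' : (0:ℝ) < 2 - 2*t' := by
            rcases lt_or_eq_of_le ht'.2 with h | h
            · linarith
            · exact absurd h htt'
          left
          have key : x = x' := by
            rcases le_or_gt (2 - 2*t) (2 - 2*t') with hle | hlt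
            ·
              -- e1 : (2-2t) • x = (2-2t') • x'
              -- x' = (2-2t')⁻¹ • ((2-2t) • x), coefficient ≤ 1
              have hx'eq : x' = ((2 - 2*t')⁻¹ * (2 - 2*t)) • x := by
                rw [mul_smul]
                exact (eq_inv_smul_iff₀ hat'.ne').mpr e1.symm
              exact (hseg x' hx' x hx _ (by positivity)
                (by rw [inv_mul_le_one₀ hat']; linarith) hx'eq).symm
            · have hxeq : x = ((2 - 2*t)⁻¹ * (2 - 2*t')) • x' := by
                rw [mul_smul]
                exact (eq_inv_smul_iff₀ hat.ne').mpr e1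
              exact hseg x hx x' hx' _ (by positivity)
                (by rw [inv_mul_le_one₀ hat]; linarith) hxeq
          refine ⟨key, ?_⟩
          rw [key] at e1
          have h3 : ((2 - 2*t) - (2 - 2*t')) • x' = 0 := by rw [sub_smul, e1, sub_self]
          rcases smul_eq_zero.mp h3 with h | h
          · have := sub_eq_zero.mp h; linarith
          · exact absurd h (hA0 x' hx')
  · intro x hx t ht y hy heq
    unfold cylMap at heq
    by_cases h1 : t ≤ 1/2
    · rw [if_pos h1] at heq
      exact absurd (congrArg Prod.fst heq) (hA0 x hx)
    · rw [if_neg h1] at heq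
      have e1 := congrArg Prod.fst heq
      have e2 := congrArg Prod.snd heq
      simp only at e1 e2
      rcases smul_eq_zero.mp e1 with h | h
      · constructor
        · linarith [sub_eq_zero.mp (by linarith : (2:ℝ) - 2*t - 0 = 0)]
        · exact e2
      · exact absurd h (hA0 x hx)
end

section
/- Let A ⊆ ℝ^m be a compact radial set with 0 ∉ A, let Y ⊆ ℝ^n be compact with 0 ∉ Y, and let f : A → Y be continuous. Then the double mapping cylinder Z_f of the diagram B ⊇ A → Y, where B ⊆ ℝ^m is compact with A ⊆ B, admits a topological embedding into ℝ^{m+n}. -/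
/-- The gluing relation for the double mapping cylinder of a diagram
`B ⊇ A → Y`: in `B ⊔ (A × [0,1]) ⊔ Y` one identifies `a ∈ B` with `(a, 0)`
and `(a, 1)` with `f a ∈ Y`.  The double mapping cylinder is the quotient
`Quot (doubleCylRel hAB f)`. -/
def doubleCylRel {α β : Type*} {B A : Set α} {Y : Set β} (hAB : A ⊆ B) (f : A → Y) :
    (B ⊕ (A × unitInterval) ⊕ Y) → (B ⊕ (A × unitInterval) ⊕ Y) → Prop :=
  fun u v =>
    (∃ a : A, u = Sum.inl (Set.inclusion hAB a) ∧ v = Sum.inr (Sum.inl (a, 0))) ∨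
    (∃ a : A, u = Sum.inr (Sum.inl (a, 1)) ∧ v = Sum.inr (Sum.inr (f a)))

lemma radial_aux {E : Type*} [NormedAddCommGroup E] [NormedSpace ℝ E] {A : Set E}
    (hrad : IsRadial A) (h0A : (0 : E) ∉ A) (a a' : A) {c d : ℝ}
    (hc : 0 < c) (hd : 0 < d) (hcd : c ≤ d)
    (h : c • (a : E) = d • (a' : E)) : a = a' ∧ c = d := by
  have ha' : (a' : E) = (c / d) • (a : E) := by
    have := congrArg (fun x => d⁻¹ • x) h
    simp only [smul_smul, inv_mul_cancel₀ hd.ne', one_smul] at this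
    rw [← this, div_eq_inv_mul]
  have hmem : (a' : E) ∈ segment ℝ 0 (a : E) ∩ A := by
    refine ⟨?_, a'.2⟩
    rw [segment_eq_image]
    exact ⟨c / d, ⟨by positivity, div_le_one_of_le₀ hcd hd.le⟩, by simp [ha'.symm]⟩
  rw [hrad a a.2] at hmem
  have haa : a = a' := Subtype.ext hmem.symm
  have hane : (a : E) ≠ 0 := fun h0 => h0A (h0 ▸ a.2)
  refine ⟨haa, smul_left_injective ℝ hane ?_⟩
  show c • (a : E) = d • (a : E)
  rw [h, ← haa]

/-- Let `A ⊆ ℝ^m` be a compact radial set with `0 ∉ A`, let `Y ⊆ ℝ^n` be compact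
with `0 ∉ Y`, let `B ⊆ ℝ^m` be compact with `A ⊆ B`, and let `f : A → Y` be
continuous.  Then the double mapping cylinder of the diagram `B ⊇ A → Y`
admits a topological embedding into `ℝ^{m+n} = ℝ^m × ℝ^n`. -/
theorem doubleCyl_embeds {m n : ℕ}
    (A B : Set (EuclideanSpace ℝ (Fin m))) (Y : Set (EuclideanSpace ℝ (Fin n)))
    (hA : IsCompact A) (hB : IsCompact B) (hY : IsCompact Y)
    (hrad : IsRadial A) (h0A : (0 : EuclideanSpace ℝ (Fin m)) ∉ A)
    (h0Y : (0 : EuclideanSpace ℝ (Fin n)) ∉ Y)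
    (hAB : A ⊆ B) (f : C(A, Y)) :
    ∃ e : Quot (doubleCylRel hAB ⇑f) →
        EuclideanSpace ℝ (Fin m) × EuclideanSpace ℝ (Fin n),
      Topology.IsEmbedding e := by
  classical
  have hfne : ∀ a : A, (f a : EuclideanSpace ℝ (Fin n)) ≠ 0 := fun a h => h0Y (h ▸ (f a).2)
  have hane : ∀ a : A, (a : EuclideanSpace ℝ (Fin m)) ≠ 0 := fun a h => h0A (h ▸ a.2)
  set g : (B ⊕ (A × unitInterval) ⊕ Y) → EuclideanSpace ℝ (Fin m) × EuclideanSpace ℝ (Fin n) :=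
    Sum.elim (fun b => ((b : EuclideanSpace ℝ (Fin m)), (0 : EuclideanSpace ℝ (Fin n))))
      (Sum.elim (fun p => ((1 - (p.2 : ℝ)) • (p.1 : EuclideanSpace ℝ (Fin m)), (p.2 : ℝ) • (f p.1 : EuclideanSpace ℝ (Fin n))))
        (fun y => ((0 : EuclideanSpace ℝ (Fin m)), (y : EuclideanSpace ℝ (Fin n))))) with hg
  have hresp : ∀ u v, doubleCylRel hAB ⇑f u v → g u = g v := by
    rintro u v (⟨a, rfl, rfl⟩ | ⟨a, rfl, rfl⟩) <;> simp [hg]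
  have hgc : Continuous g := by
    refine Continuous.sumElim (by fun_prop) (Continuous.sumElim ?_ (by fun_prop))
    fun_prop
  -- helper: B point vs cylinder point
  have hBC : ∀ (b : B) (a : A) (t : unitInterval),
      ((b : EuclideanSpace ℝ (Fin m)), (0 : EuclideanSpace ℝ (Fin n))) = ((1 - (t : ℝ)) • (a : EuclideanSpace ℝ (Fin m)), (t : ℝ) • (f a : EuclideanSpace ℝ (Fin n))) →
      Quot.mk (doubleCylRel hAB ⇑f) (Sum.inl b) =
        Quot.mk (doubleCylRel hAB ⇑f) (Sum.inr (Sum.inl (a, t))) := by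
    intro b a t h
    rw [Prod.mk.injEq] at h
    have ht0 : (t : ℝ) = 0 := by
      rcases smul_eq_zero.mp h.2.symm with h' | h'
      · exact h'
      · exact absurd h' (hfne a)
    have ht0' : t = 0 := Subtype.ext ht0
    have hb : b = Set.inclusion hAB a := by
      apply Subtype.ext
      have := h.1
      rw [ht0] at this
      simpa using this
    subst ht0' hb
    exact Quot.sound (Or.inl ⟨a, rfl, rfl⟩)
  -- helper: cylinder point vs Y point
  have hCY : ∀ (a : A) (t : unitInterval) (y : Y),
      ((1 - (t : ℝ)) • (a : EuclideanSpace ℝ (Fin m)), (t : ℝ) • (f a : EuclideanSpace ℝ (Fin n))) = ((0 : EuclideanSpace ℝ (Fin m)), (y : EuclideanSpace ℝ (Fin n))) →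
      Quot.mk (doubleCylRel hAB ⇑f) (Sum.inr (Sum.inl (a, t))) =
        Quot.mk (doubleCylRel hAB ⇑f) (Sum.inr (Sum.inr y)) := by
    intro a t y h
    rw [Prod.mk.injEq] at h
    have ht1 : (t : ℝ) = 1 := by
      rcases smul_eq_zero.mp h.1 with h' | h'
      · linarith [sub_eq_zero.mp h']
      · exact absurd h' (hane a)
    have ht1' : t = 1 := Subtype.ext ht1
    have hy : y = f a := by
      apply Subtype.ext
      have := h.2
      rw [ht1, one_smul] at this
      exact this.symm
    subst ht1' hy
    exact Quot.sound (Or.inr ⟨a, rfl, rfl⟩)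
  -- helper: cylinder vs cylinder
  have hCC : ∀ (a a' : A) (t t' : unitInterval),
      ((1 - (t : ℝ)) • (a : EuclideanSpace ℝ (Fin m)), (t : ℝ) • (f a : EuclideanSpace ℝ (Fin n))) =
        ((1 - (t' : ℝ)) • (a' : EuclideanSpace ℝ (Fin m)), (t' : ℝ) • (f a' : EuclideanSpace ℝ (Fin n))) →
      Quot.mk (doubleCylRel hAB ⇑f) (Sum.inr (Sum.inl (a, t))) =
        Quot.mk (doubleCylRel hAB ⇑f) (Sum.inr (Sum.inl (a', t'))) := by
    intro a a' t t' h
    rw [Prod.mk.injEq] at h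
    obtain ⟨h1, h2⟩ := h
    by_cases ht : (t : ℝ) = 1
    · by_cases ht' : (t' : ℝ) = 1
      · -- both top: f a = f a'
        have hfa : f a = f a' := by
          apply Subtype.ext
          have := h2
          rw [ht, ht', one_smul, one_smul] at this
          exact this
        have ht1 : t = 1 := Subtype.ext ht
        have ht1' : t' = 1 := Subtype.ext ht'
        subst ht1 ht1'
        calc Quot.mk (doubleCylRel hAB ⇑f) (Sum.inr (Sum.inl (a, 1)))
            = Quot.mk (doubleCylRel hAB ⇑f) (Sum.inr (Sum.inr (f a))) :=
              Quot.sound (Or.inr ⟨a, rfl, rfl⟩)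
          _ = Quot.mk (doubleCylRel hAB ⇑f) (Sum.inr (Sum.inr (f a'))) := by rw [hfa]
          _ = Quot.mk (doubleCylRel hAB ⇑f) (Sum.inr (Sum.inl (a', 1))) :=
              (show Quot.mk (doubleCylRel hAB ⇑f) (Sum.inr (Sum.inl (a', 1))) =
                  Quot.mk (doubleCylRel hAB ⇑f) (Sum.inr (Sum.inr (f a'))) from
                Quot.sound (Or.inr ⟨a', rfl, rfl⟩)).symm
      · exfalso
        have ht'lt : (t' : ℝ) < 1 := lt_of_le_of_ne t'.2.2 ht'
        rw [ht, sub_self, zero_smul] at h1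
        rcases smul_eq_zero.mp h1.symm with h' | h'
        · linarith [sub_eq_zero.mp h']
        · exact hane a' h'
    · by_cases ht' : (t' : ℝ) = 1
      · exfalso
        have htlt : (t : ℝ) < 1 := lt_of_le_of_ne t.2.2 ht
        rw [ht', sub_self, zero_smul] at h1
        rcases smul_eq_zero.mp h1 with h' | h'
        · linarith [sub_eq_zero.mp h']
        · exact hane a h'
      · -- both interior
        have hc : (0 : ℝ) < 1 - t := by have := lt_of_le_of_ne t.2.2 ht; linarith
        have hd : (0 : ℝ) < 1 - t' := by have := lt_of_le_of_ne t'.2.2 ht'; linarith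
        have haa : a = a' ∧ t = t' := by
          rcases le_total (1 - (t : ℝ)) (1 - (t' : ℝ)) with hle | hle
          · obtain ⟨he, hce⟩ := radial_aux hrad h0A a a' hc hd hle h1
            exact ⟨he, Subtype.ext (by linarith)⟩
          · obtain ⟨he, hce⟩ := radial_aux hrad h0A a' a hd hc hle h1.symm
            exact ⟨he.symm, Subtype.ext (by linarith)⟩
        rw [haa.1, haa.2]
  have hkey : ∀ u v, g u = g v →
      Quot.mk (doubleCylRel hAB ⇑f) u = Quot.mk (doubleCylRel hAB ⇑f) v := by
    rintro (b | ⟨a, t⟩ | y) (b' | ⟨a', t'⟩ | y') h <;>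
      simp only [hg, Sum.elim_inl, Sum.elim_inr] at h
    · exact congrArg _ (congrArg Sum.inl (Subtype.ext (Prod.ext_iff.mp h).1))
    · exact hBC b a' t' h
    · exfalso
      apply h0Y
      have h2 := congrArg Prod.snd h
      simp only at h2
      exact h2 ▸ y'.2
    · exact (hBC b' a t h.symm).symm
    · exact hCC a a' t t' h
    · exact hCY a t y' h
    · exfalso
      apply h0Y
      have h2 := congrArg Prod.snd h
      simp only at h2
      exact h2 ▸ y.2
    · exact (hCY a' t' y h.symm).symm
    · exact congrArg _ (congrArg Sum.inr (congrArg Sum.inr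
        (Subtype.ext (Prod.ext_iff.mp h).2)))
  haveI : CompactSpace A := isCompact_iff_compactSpace.mp hA
  haveI : CompactSpace B := isCompact_iff_compactSpace.mp hB
  haveI : CompactSpace Y := isCompact_iff_compactSpace.mp hY
  refine ⟨Quot.lift g hresp, ?_⟩
  have hcont : Continuous (Quot.lift g hresp) := continuous_quot_lift hresp hgc
  have hinj : Function.Injective (Quot.lift g hresp) := by
    intro x y
    obtain ⟨u, rfl⟩ := Quot.exists_rep x
    obtain ⟨v, rfl⟩ := Quot.exists_rep y
    exact hkey u v
  exact (hcont.isClosedEmbedding hinj).isEmbedding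
end

section
/- Let f : S^{m-1} → Y be a continuous map where Y is a compact subset of ℝ^n with 0 ∉ Y. Then the mapping cone C_f of f embeds topologically into ℝ^{m+n} = ℝ^m × ℝ^n. -/
/-- The gluing relation for the mapping cone of `f : X → Y`: in
`(X × [0,1]) ⊔ Y` one collapses `X × {0}` to a point and identifies `(x, 1)`
with `f x`.  The mapping cone is the quotient `Quot (mappingConeRel f)`. -/
def mappingConeRel {X Y : Type*} (f : X → Y) :
    (X × unitInterval ⊕ Y) → (X × unitInterval ⊕ Y) → Prop :=
  fun u v =>
    (∃ x x' : X, u = Sum.inl (x, 0) ∧ v = Sum.inl (x', 0)) ∨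
    (∃ x : X, u = Sum.inl (x, 1) ∧ v = Sum.inr (f x))

/-- Let `Y` be a compact subset of `ℝ^n` with `0 ∉ Y` and let
`f : S^{m-1} → Y` be a continuous map from the unit sphere of `ℝ^m`.  Then the
mapping cone of `f` embeds topologically into `ℝ^{m+n} = ℝ^m × ℝ^n`. -/
theorem mappingCone_embeds {m n : ℕ}
    (Y : Set (EuclideanSpace ℝ (Fin n))) (hY : IsCompact Y)
    (h0Y : (0 : EuclideanSpace ℝ (Fin n)) ∉ Y)
    (f : C(Metric.sphere (0 : EuclideanSpace ℝ (Fin m)) 1, Y)) :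
    ∃ e : Quot (mappingConeRel ⇑f) →
        EuclideanSpace ℝ (Fin m) × EuclideanSpace ℝ (Fin n),
      Topology.IsEmbedding e := by
  classical
  let X : Set (EuclideanSpace ℝ (Fin m)) := Metric.sphere 0 1
  let E := EuclideanSpace ℝ (Fin m)
  let F := EuclideanSpace ℝ (Fin n)
  let r := mappingConeRel (⇑f)
  -- the candidate map on the disjoint sum
  let g : (X × unitInterval ⊕ Y) → E × F :=
    Sum.elim
      (fun p => (min (p.2 : ℝ) (1 - (p.2 : ℝ)) • (p.1 : E), (p.2 : ℝ) • ((f p.1 : F))))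
      (fun y => (0, (y : F)))
  have hgdef : g = Sum.elim
      (fun (p : X × unitInterval) =>
        ((min (p.2 : ℝ) (1 - (p.2 : ℝ)) • (p.1 : E), (p.2 : ℝ) • ((f p.1 : F))) : E × F))
      (fun (y : Y) => ((0, (y : F)) : E × F)) := rfl
  -- basic facts
  have hxnorm : ∀ x : X, ‖(x : E)‖ = 1 := fun x => mem_sphere_zero_iff_norm.mp x.2
  have hfne : ∀ x : X, ((f x : F)) ≠ 0 := by
    intro x h
    exact h0Y (h ▸ (f x).2)
  have hyne : ∀ y : Y, (y : F) ≠ 0 := by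
    intro y h
    exact h0Y (h ▸ y.2)
  have hmin : ∀ t : unitInterval, (t : ℝ) ≠ 0 → (t : ℝ) ≠ 1 →
      0 < min (t : ℝ) (1 - (t : ℝ)) := by
    intro t h0 h1
    exact lt_min (t.2.1.lt_of_ne (Ne.symm h0)) (sub_pos.mpr (t.2.2.lt_of_ne h1))
  -- g respects the relation
  have hresp : ∀ u v, r u v → g u = g v := by
    rintro u v (⟨x, x', rfl, rfl⟩ | ⟨x, rfl, rfl⟩) <;> simp [hgdef]
  refine ⟨Quot.lift g hresp, ?_⟩
  -- injectivity of the induced map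
  have key : ∀ (p : X × unitInterval) (y : Y),
      g (Sum.inl p) = g (Sum.inr y) → Relation.EqvGen r (Sum.inl p) (Sum.inr y) := by
    rintro ⟨x, t⟩ y hg
    simp only [hgdef, Sum.elim_inl, Sum.elim_inr, Prod.mk.injEq] at hg
    obtain ⟨h1, h2⟩ := hg
    by_cases ht0 : (t : ℝ) = 0
    · exfalso
      apply hyne y
      rw [← h2, ht0, zero_smul]
    · by_cases ht1 : (t : ℝ) = 1
      · have hyfx : y = f x := by
          apply Subtype.ext
          rw [← h2, ht1, one_smul]
        have ht1' : t = 1 := Subtype.ext ht1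
        subst ht1'
        rw [hyfx]
        exact Relation.EqvGen.rel _ _ (Or.inr ⟨x, rfl, rfl⟩)
      · exfalso
        have hpos := hmin t ht0 ht1
        have := hxnorm x
        rcases smul_eq_zero.mp h1 with h | h
        · exact hpos.ne' h
        · rw [h, norm_zero] at this; norm_num at this
  refine Topology.IsClosedEmbedding.isEmbedding ?_
  haveI : CompactSpace Y := isCompact_iff_compactSpace.mp hY
  refine Continuous.isClosedEmbedding ?_ ?_
  · -- continuity
    refine continuous_quot_lift hresp ?_
    refine Continuous.sumElim ?_ ?_
    · refine Continuous.prodMk ?_ ?_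
      · exact ((continuous_min.comp ((continuous_subtype_val.comp continuous_snd).prodMk
          (continuous_const.sub (continuous_subtype_val.comp continuous_snd)))).smul
          (continuous_subtype_val.comp continuous_fst))
      · exact ((continuous_subtype_val.comp continuous_snd).smul
          (continuous_subtype_val.comp (f.continuous.comp continuous_fst)))
    · exact continuous_const.prodMk continuous_subtype_val
  · -- injectivity
    intro a b
    refine Quot.induction_on₂ a b ?_
    intro u v hg
    refine Quot.eqvGen_sound ?_
    rcases u with p | y <;> rcases v with q | y'
    · -- inl / inl
      obtain ⟨x, t⟩ := p
      obtain ⟨x', t'⟩ := q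
      simp only [hgdef, Sum.elim_inl, Prod.mk.injEq] at hg
      obtain ⟨h1, h2⟩ := hg
      have hiff : (t : ℝ) = 0 ↔ (t' : ℝ) = 0 := by
        constructor
        · intro h
          rw [h, zero_smul] at h2
          rcases smul_eq_zero.mp h2.symm with h' | h'
          · exact h'
          · exact absurd h' (hfne x')
        · intro h
          rw [h, zero_smul] at h2
          rcases smul_eq_zero.mp h2 with h' | h'
          · exact h'
          · exact absurd h' (hfne x)
      by_cases ht0 : (t : ℝ) = 0
      · have ht'0 : (t' : ℝ) = 0 := hiff.mp ht0
        have e1 : t = 0 := Subtype.ext ht0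
        have e2 : t' = 0 := Subtype.ext ht'0
        exact Relation.EqvGen.rel _ _
          (Or.inl ⟨x, x', by rw [e1], by rw [e2]⟩)
      · have ht'0 : (t' : ℝ) ≠ 0 := fun h => ht0 (hiff.mpr h)
        by_cases ht1 : (t : ℝ) = 1
        · by_cases ht'1 : (t' : ℝ) = 1
          · -- both endpoints: f x = f x'
            have hfx : f x = f x' := by
              apply Subtype.ext
              have := h2
              rw [ht1, ht'1, one_smul, one_smul] at this
              exact this
            have e1 : t = 1 := Subtype.ext ht1
            have e2 : t' = 1 := Subtype.ext ht'1
            refine Relation.EqvGen.trans _ (Sum.inr (f x)) _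
              (Relation.EqvGen.rel _ _ (Or.inr ⟨x, by rw [e1], rfl⟩)) ?_
            rw [hfx]
            exact Relation.EqvGen.symm _ _
              (Relation.EqvGen.rel _ _ (Or.inr ⟨x', by rw [e2], rfl⟩))
          · exfalso
            have hpos := hmin t' ht'0 ht'1
            rw [ht1] at h1
            simp only [sub_self, min_eq_right (le_refl (0:ℝ)), min_self] at h1
            have h1' : (0 : E) = min (t' : ℝ) (1 - (t' : ℝ)) • (x' : E) := by
              rw [← h1]
              norm_num
            rcases smul_eq_zero.mp h1'.symm with h | h
            · exact hpos.ne' h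
            · have := hxnorm x'
              rw [h, norm_zero] at this; norm_num at this
        · by_cases ht'1 : (t' : ℝ) = 1
          · exfalso
            have hpos := hmin t ht0 ht1
            rw [ht'1] at h1
            have h1' : min (t : ℝ) (1 - (t : ℝ)) • (x : E) = 0 := by
              rw [h1]; norm_num
            rcases smul_eq_zero.mp h1' with h | h
            · exact hpos.ne' h
            · have := hxnorm x
              rw [h, norm_zero] at this; norm_num at this
          · -- both interior
            have hpos := hmin t ht0 ht1
            have hpos' := hmin t' ht'0 ht'1
            have hnorm : min (t : ℝ) (1 - (t : ℝ)) = min (t' : ℝ) (1 - (t' : ℝ)) := by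
              have := congrArg norm h1
              rw [norm_smul, norm_smul, hxnorm x, hxnorm x', mul_one, mul_one,
                Real.norm_eq_abs, Real.norm_eq_abs, abs_of_pos hpos, abs_of_pos hpos'] at this
              exact this
            have hx : x = x' := by
              apply Subtype.ext
              rw [hnorm] at h1
              exact smul_right_injective _ hpos'.ne' h1
            subst hx
            have ht : (t : ℝ) = (t' : ℝ) := by
              have := h2
              exact smul_left_injective ℝ (hfne x) this
            have : t = t' := Subtype.ext ht
            subst this
            exact Relation.EqvGen.refl _
    · exact key _ _ hg
    · exact Relation.EqvGen.symm _ _ (key _ _ hg.symm)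
    · -- inr / inr
      simp only [hgdef, Sum.elim_inr, Prod.mk.injEq] at hg
      have : y = y' := Subtype.ext hg.2
      rw [this]
      exact Relation.EqvGen.refl _
end

section
/- Radial embedding extension: if i : Z_{f'} → ℝ^{m+n} is an embedding of a double mapping cylinder whose image is disjoint from the open segment (0_m × 0_n, (0_m, y_0)) except at its endpoint (0_m, y_0), where y_0 ∈ Y is the unique point of Y closest to the origin of ℝ^n, then i(Z_{f'}) ∪ [ (0,0), (0, y_0) ] is homeomorphic to Z_f where f extends f' over the origin point with f(0) = y_0. -/
namespace AttachSegAux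

open Topology Filter

lemma aux_pos_min (s : ℕ → ℝ) (hs : ∀ k, 0 < s k) (J : ℕ) :
    ∃ c > 0, ∀ k < J, c ≤ s k := by
  induction J with
  | zero => exact ⟨1, one_pos, by omega⟩
  | succ J ih =>
    obtain ⟨c, hc, hall⟩ := ih
    refine ⟨min c (s J), lt_min hc (hs J), fun k hk => ?_⟩
    rcases Nat.lt_succ_iff_lt_or_eq.1 hk with h | h
    · exact le_trans (min_le_left _ _) (hall k h)
    · subst h; exact min_le_right _ _

variable {m n : ℕ} {A B : Set (EuclideanSpace ℝ (Fin m))} {Y : Set (EuclideanSpace ℝ (Fin n))}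

/-- height invariant on the double mapping cylinder of `f'`. -/
def ht : (B ⊕ ((A \ {0} : Set (EuclideanSpace ℝ (Fin m))) × unitInterval) ⊕ Y) → ℝ :=
  Sum.elim (fun _ => 0) (Sum.elim (fun p => (p.2 : ℝ)) (fun _ => 1))

lemma ht_resp (hA'B : A \ {0} ⊆ B) (f' : (A \ {0} : Set (EuclideanSpace ℝ (Fin m))) → Y) :
    ∀ u v, doubleCylRel hA'B f' u v → ht u = ht v := by
  rintro u v (⟨a, rfl, rfl⟩ | ⟨a, rfl, rfl⟩) <;> simp [ht]

section main

variable (h0A : (0 : EuclideanSpace ℝ (Fin m)) ∈ A)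
variable (hAB : A ⊆ B) (hA'B : A \ {0} ⊆ B)
variable (fg : A → Y) (f' : (A \ {0} : Set (EuclideanSpace ℝ (Fin m))) → Y)
variable (i : Quot (doubleCylRel hA'B f') →
    EuclideanSpace ℝ (Fin m) × EuclideanSpace ℝ (Fin n))
variable (y0 : Y)

open Classical in
/-- The glue map on representatives. -/
noncomputable def gfun : (B ⊕ (A × unitInterval) ⊕ Y) →
    EuclideanSpace ℝ (Fin m) × EuclideanSpace ℝ (Fin n) :=
  Sum.elim (fun b => i (Quot.mk _ (Sum.inl b)))
    (Sum.elim
      (fun p => if h : (p.1 : EuclideanSpace ℝ (Fin m)) = 0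
        then ((0 : EuclideanSpace ℝ (Fin m)), (p.2 : ℝ) • (y0 : EuclideanSpace ℝ (Fin n)))
        else i (Quot.mk _ (Sum.inr (Sum.inl (⟨p.1.1, p.1.2, h⟩, p.2)))))
      (fun y => i (Quot.mk _ (Sum.inr (Sum.inr y)))))

/-- The comparison map between the two cylinders, on representatives. -/
def jmap : (B ⊕ ((A \ {0} : Set (EuclideanSpace ℝ (Fin m))) × unitInterval) ⊕ Y) →
    (B ⊕ (A × unitInterval) ⊕ Y) :=
  Sum.elim Sum.inl
    (Sum.elim (fun p => Sum.inr (Sum.inl (⟨p.1.1, p.1.2.1⟩, p.2)))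
      (fun y => Sum.inr (Sum.inr y)))

lemma jmap_resp (hf' : ∀ a, f' a = fg ⟨(a : EuclideanSpace ℝ (Fin m)), a.2.1⟩) :
    ∀ u v, doubleCylRel hA'B f' u v →
      Quot.mk (doubleCylRel hAB fg) (jmap u) = Quot.mk (doubleCylRel hAB fg) (jmap v) := by
  rintro u v (⟨a, rfl, rfl⟩ | ⟨a, rfl, rfl⟩)
  · exact Quot.sound (Or.inl ⟨⟨a.1, a.2.1⟩, rfl, rfl⟩)
  · refine Quot.sound (Or.inr ⟨⟨a.1, a.2.1⟩, rfl, ?_⟩)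
    simp only [jmap, Sum.elim_inr]
    rw [hf' a]

/-- comparison map between the cylinders. -/
def jQ (hf' : ∀ a, f' a = fg ⟨(a : EuclideanSpace ℝ (Fin m)), a.2.1⟩) :
    Quot (doubleCylRel hA'B f') → Quot (doubleCylRel hAB fg) :=
  Quot.lift (fun u => Quot.mk _ (jmap u)) (jmap_resp hAB hA'B fg f' hf')


lemma gfun_resp
    (hf0 : fg ⟨0, h0A⟩ = y0)
    (hf' : ∀ a, f' a = fg ⟨(a : EuclideanSpace ℝ (Fin m)), a.2.1⟩)
    (hb0 : i (Quot.mk _ (Sum.inl ⟨0, hAB h0A⟩)) = (0, 0))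
    (hy0im : i (Quot.mk _ (Sum.inr (Sum.inr y0)))
      = ((0 : EuclideanSpace ℝ (Fin m)), (y0 : EuclideanSpace ℝ (Fin n)))) :
    ∀ u v, doubleCylRel hAB fg u v → gfun hA'B f' i y0 u = gfun hA'B f' i y0 v := by
  rintro u v (⟨a, rfl, rfl⟩ | ⟨a, rfl, rfl⟩)
  · simp only [gfun, Sum.elim_inl, Sum.elim_inr]
    by_cases ha : (a : EuclideanSpace ℝ (Fin m)) = 0
    · rw [dif_pos ha]
      have ha' : a = ⟨0, h0A⟩ := Subtype.ext ha
      subst ha'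
      have h1 : Set.inclusion hAB (⟨0, h0A⟩ : A) = (⟨0, hAB h0A⟩ : B) := rfl
      rw [h1, hb0]
      simp
    · rw [dif_neg ha]
      exact congrArg i (Quot.sound (Or.inl ⟨⟨a.1, a.2, ha⟩, rfl, rfl⟩))
  · simp only [gfun, Sum.elim_inl, Sum.elim_inr]
    by_cases ha : (a : EuclideanSpace ℝ (Fin m)) = 0
    · rw [dif_pos ha]
      have ha' : a = ⟨0, h0A⟩ := Subtype.ext ha
      subst ha'
      rw [hf0, hy0im]
      simp
    · rw [dif_neg ha]
      have hfa : f' ⟨a.1, a.2, ha⟩ = fg a := by rw [hf']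
      calc i (Quot.mk _ (Sum.inr (Sum.inl (⟨a.1, a.2, ha⟩, 1))))
          = i (Quot.mk _ (Sum.inr (Sum.inr (f' ⟨a.1, a.2, ha⟩)))) :=
            congrArg i (Quot.sound (Or.inr ⟨⟨a.1, a.2, ha⟩, rfl, rfl⟩))
        _ = i (Quot.mk _ (Sum.inr (Sum.inr (fg a)))) := by rw [hfa]

open Classical in
lemma gfun_cont (hic : Continuous i) (ε : ℝ) (hε : 0 < ε)
    (hεA : ∀ x ∈ A, ‖x‖ < ε → x = 0) :
    Continuous (gfun hA'B f' i y0) := by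
  have hU1 : IsOpen {p : A × unitInterval | (p.1 : EuclideanSpace ℝ (Fin m)) = 0} := by
    have he : {p : A × unitInterval | (p.1 : EuclideanSpace ℝ (Fin m)) = 0}
        = (fun p : A × unitInterval => (p.1 : EuclideanSpace ℝ (Fin m))) ⁻¹' Metric.ball 0 ε := by
      ext p
      simp only [Set.mem_setOf_eq, Set.mem_preimage, Metric.mem_ball, dist_zero_right]
      constructor
      · intro h; rw [h]; simpa using hε
      · intro h; exact hεA _ p.1.2 h
    rw [he]
    exact (continuous_subtype_val.comp continuous_fst).isOpen_preimage _ Metric.isOpen_ball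
  have hU2 : IsOpen {p : A × unitInterval | (p.1 : EuclideanSpace ℝ (Fin m)) ≠ 0} :=
    IsOpen.preimage (continuous_subtype_val.comp continuous_fst) isOpen_ne
  unfold gfun
  refine Continuous.sumElim (hic.comp (continuous_quot_mk.comp continuous_inl))
    (Continuous.sumElim ?_ (hic.comp (continuous_quot_mk.comp (continuous_inr.comp continuous_inr))))
  have hc1 : ContinuousOn (fun p : A × unitInterval =>
      if h : (p.1 : EuclideanSpace ℝ (Fin m)) = 0
        then ((0 : EuclideanSpace ℝ (Fin m)), (p.2 : ℝ) • (y0 : EuclideanSpace ℝ (Fin n)))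
        else i (Quot.mk _ (Sum.inr (Sum.inl (⟨p.1.1, p.1.2, h⟩, p.2)))))
      {p : A × unitInterval | (p.1 : EuclideanSpace ℝ (Fin m)) = 0} := by
    rw [continuousOn_iff_continuous_restrict]
    have he : Set.domRestrict {p : A × unitInterval | (p.1 : EuclideanSpace ℝ (Fin m)) = 0}
        (fun p : A × unitInterval =>
          if h : (p.1 : EuclideanSpace ℝ (Fin m)) = 0
            then ((0 : EuclideanSpace ℝ (Fin m)), (p.2 : ℝ) • (y0 : EuclideanSpace ℝ (Fin n)))
            else i (Quot.mk _ (Sum.inr (Sum.inl (⟨p.1.1, p.1.2, h⟩, p.2)))))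
        = fun q => ((0 : EuclideanSpace ℝ (Fin m)),
            ((q.1.2 : ℝ)) • (y0 : EuclideanSpace ℝ (Fin n))) := by
      funext q
      exact dif_pos (show ((q.1.1 : A) : EuclideanSpace ℝ (Fin m)) = 0 from q.2)
    rw [he]
    exact continuous_const.prodMk
      ((continuous_subtype_val.comp (continuous_snd.comp continuous_subtype_val)).smul continuous_const)
  have hc2 : ContinuousOn (fun p : A × unitInterval =>
      if h : (p.1 : EuclideanSpace ℝ (Fin m)) = 0
        then ((0 : EuclideanSpace ℝ (Fin m)), (p.2 : ℝ) • (y0 : EuclideanSpace ℝ (Fin n)))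
        else i (Quot.mk _ (Sum.inr (Sum.inl (⟨p.1.1, p.1.2, h⟩, p.2)))))
      {p : A × unitInterval | (p.1 : EuclideanSpace ℝ (Fin m)) ≠ 0} := by
    rw [continuousOn_iff_continuous_restrict]
    have he : Set.domRestrict {p : A × unitInterval | (p.1 : EuclideanSpace ℝ (Fin m)) ≠ 0}
        (fun p : A × unitInterval =>
          if h : (p.1 : EuclideanSpace ℝ (Fin m)) = 0
            then ((0 : EuclideanSpace ℝ (Fin m)), (p.2 : ℝ) • (y0 : EuclideanSpace ℝ (Fin n)))
            else i (Quot.mk _ (Sum.inr (Sum.inl (⟨p.1.1, p.1.2, h⟩, p.2)))))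
        = fun q => i (Quot.mk _ (Sum.inr (Sum.inl (⟨q.1.1.1, q.1.1.2, q.2⟩, q.1.2)))) := by
      funext q
      exact dif_neg (show ¬ ((q.1.1 : A) : EuclideanSpace ℝ (Fin m)) = 0 from q.2)
    rw [he]
    refine hic.comp (continuous_quot_mk.comp (continuous_inr.comp (continuous_inl.comp
      (Continuous.prodMk ?_ (continuous_snd.comp continuous_subtype_val)))))
    exact Continuous.subtype_mk ((continuous_subtype_val.comp continuous_fst).comp continuous_subtype_val) _
  rw [continuous_iff_continuousAt]
  intro p
  by_cases hp : (p.1 : EuclideanSpace ℝ (Fin m)) = 0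
  · exact hc1.continuousAt (hU1.mem_nhds hp)
  · exact hc2.continuousAt (hU2.mem_nhds hp)

end main

section fan

/-- bump function used in the fan argument. -/
noncomputable def bump (w : ℝ → ℝ) :
    ((A \ {0} : Set (EuclideanSpace ℝ (Fin m))) × unitInterval) → ℝ :=
  fun p => min ((p.2 : ℝ) / w ‖(p.1 : EuclideanSpace ℝ (Fin m))‖) 1 * min (2 * (1 - (p.2 : ℝ))) 1

/-- the separating function on representatives. -/
noncomputable def Fsum (w : ℝ → ℝ) :
    (B ⊕ ((A \ {0} : Set (EuclideanSpace ℝ (Fin m))) × unitInterval) ⊕ Y) → ℝ :=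
  Sum.elim (fun _ => 0) (Sum.elim (bump w) (fun _ => 0))

lemma Fsum_resp (w : ℝ → ℝ) (hA'B : A \ {0} ⊆ B)
    (f' : (A \ {0} : Set (EuclideanSpace ℝ (Fin m))) → Y) :
    ∀ u v, doubleCylRel hA'B f' u v → Fsum (B := B) (Y := Y) w u = Fsum (B := B) (Y := Y) w v := by
  rintro u v (⟨a, rfl, rfl⟩ | ⟨a, rfl, rfl⟩) <;> norm_num [Fsum, bump]

lemma Fsum_cont (w : ℝ → ℝ) (hw : Continuous w)
    (hwne : ∀ x : (A \ {0} : Set (EuclideanSpace ℝ (Fin m))),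
      w ‖(x : EuclideanSpace ℝ (Fin m))‖ ≠ 0) :
    Continuous (Fsum (A := A) (B := B) (Y := Y) w) := by
  have h1 : Continuous fun p : ((A \ {0} : Set (EuclideanSpace ℝ (Fin m))) × unitInterval) =>
      (p.2 : ℝ) := continuous_subtype_val.comp continuous_snd
  have h2 : Continuous fun p : ((A \ {0} : Set (EuclideanSpace ℝ (Fin m))) × unitInterval) =>
      w ‖(p.1 : EuclideanSpace ℝ (Fin m))‖ :=
    hw.comp ((continuous_subtype_val.comp continuous_fst).norm)
  have hbump : Continuous (bump (A := A) w) :=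
    ((h1.div h2 fun p => hwne p.1).min continuous_const).mul
      ((continuous_const.mul (continuous_const.sub h1)).min continuous_const)
  exact continuous_const.sumElim (hbump.sumElim continuous_const)

lemma exists_wfun (r s : ℕ → ℝ) (hr0 : Filter.Tendsto r Filter.atTop (𝓝 0))
    (hs : ∀ k, 0 < s k) :
    ∃ w : ℝ → ℝ, Continuous w ∧ (∀ x, 0 < x → 0 < w x) ∧ ∀ k, w (r k) ≤ s k := by
  refine ⟨fun x => ⨅ k, (s k + |x - r k|), ?_, ?_, ?_⟩
  case refine_3 =>
    intro k
    have hb : BddBelow (Set.range fun j => (s j + |r k - r j|)) := by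
      refine ⟨0, ?_⟩
      rintro _ ⟨j, rfl⟩
      show (0:ℝ) ≤ s j + |r k - r j|
      have := (hs j).le
      have := abs_nonneg (r k - r j)
      linarith
    have := ciInf_le hb k
    simpa using this
  case refine_2 =>
    intro x hx
    obtain ⟨J, hJ⟩ := Filter.eventually_atTop.1 (hr0.eventually_lt_const (half_pos hx))
    obtain ⟨c, hcpos, hc⟩ := aux_pos_min s hs J
    have hlow : min (x / 2) c ≤ ⨅ k, (s k + |x - r k|) := by
      apply le_ciInf
      intro k
      by_cases hk : k < J
      · calc min (x / 2) c ≤ c := min_le_right _ _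
          _ ≤ s k := hc k hk
          _ ≤ s k + |x - r k| := le_add_of_nonneg_right (abs_nonneg _)
      · have hk' : r k < x / 2 := hJ k (by omega)
        have h1 : x / 2 ≤ x - r k := by
          by_cases hrk : 0 ≤ r k
          · linarith
          · linarith
        calc min (x / 2) c ≤ x / 2 := min_le_left _ _
          _ ≤ |x - r k| := le_trans h1 (le_abs_self _)
          _ ≤ s k + |x - r k| := le_add_of_nonneg_left (hs k).le
    exact lt_of_lt_of_le (lt_min (half_pos hx) hcpos) hlow
  case refine_1 =>
    have hbdd : ∀ x : ℝ, BddBelow (Set.range fun k => (s k + |x - r k|)) := by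
      intro x
      refine ⟨0, ?_⟩
      rintro _ ⟨j, rfl⟩
      show (0:ℝ) ≤ s j + |x - r j|
      have := (hs j).le
      have := abs_nonneg (x - r j)
      linarith
    have hlip : ∀ x y : ℝ, (⨅ k, (s k + |x - r k|)) ≤ (⨅ k, (s k + |y - r k|)) + |x - y| := by
      intro x y
      have h := le_ciInf (f := fun k => s k + |y - r k|)
        (c := (⨅ k, (s k + |x - r k|)) - |x - y|) ?_
      · linarith
      · intro k
        show (⨅ k, (s k + |x - r k|)) - |x - y| ≤ s k + |y - r k|
        have h1 : (⨅ k, (s k + |x - r k|)) ≤ s k + |x - r k| := ciInf_le (hbdd x) k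
        have h2 : |x - r k| ≤ |x - y| + |y - r k| := abs_sub_le _ _ _
        linarith
    apply (LipschitzWith.of_dist_le_mul (K := 1) ?_).continuous
    intro x y
    rw [NNReal.coe_one, one_mul, Real.dist_eq, Real.dist_eq]
    rw [abs_sub_le_iff]
    constructor
    · linarith [hlip x y, le_abs_self (x - y)]
    · linarith [hlip y x, abs_sub_comm x y, le_abs_self (y - x)]

end fan

end AttachSegAux


/-- Radial embedding extension (case `0 ∈ A` of Proposition 1).  Let
`A ⊆ B ⊆ ℝ^m` be compact with `A \ {0}` radial and `0 ∈ A`, let `Y ⊆ ℝ^n` be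
compact, `f : A → Y` continuous, `y₀ ∈ Y` the unique point of `Y` closest to
the origin, `f 0 = y₀`, and `f'` the restriction of `f` to `A \ {0}`.  If
`i : Z_{f'} → ℝ^m × ℝ^n` is an embedding of the double mapping cylinder of
`f'` sending `0 ∈ B` to `(0,0)` and `y₀ ∈ Y` to `(0, y₀)`, whose image meets
the segment from `(0,0)` to `(0, y₀)` only in its endpoints, then
`i(Z_{f'}) ∪ [(0,0), (0, y₀)]` is homeomorphic to the double mapping cylinder
`Z_f` of `f`. -/
theorem attach_segment_homeomorph_doubleCyl {m n : ℕ}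
    (A B : Set (EuclideanSpace ℝ (Fin m))) (Y : Set (EuclideanSpace ℝ (Fin n)))
    (hA : IsCompact A) (hB : IsCompact B) (hY : IsCompact Y)
    (h0A : (0 : EuclideanSpace ℝ (Fin m)) ∈ A)
    (hrad : IsRadial (A \ {0}))
    (hAB : A ⊆ B) (hA'B : A \ {0} ⊆ B)
    (f : C(A, Y)) (y0 : Y)
    (hy0 : ∀ y : Y, y ≠ y0 →
      ‖(y0 : EuclideanSpace ℝ (Fin n))‖ < ‖(y : EuclideanSpace ℝ (Fin n))‖)
    (hf0 : f ⟨0, h0A⟩ = y0)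
    (f' : (A \ {0} : Set (EuclideanSpace ℝ (Fin m))) → Y)
    (hf' : ∀ a, f' a = f ⟨(a : EuclideanSpace ℝ (Fin m)), a.2.1⟩)
    (i : Quot (doubleCylRel hA'B f') →
      EuclideanSpace ℝ (Fin m) × EuclideanSpace ℝ (Fin n))
    (hi : Topology.IsEmbedding i)
    (hmeet : Set.range i ∩
        segment ℝ (0, 0) ((0 : EuclideanSpace ℝ (Fin m)),
          (y0 : EuclideanSpace ℝ (Fin n))) ⊆
      {((0 : EuclideanSpace ℝ (Fin m)), (0 : EuclideanSpace ℝ (Fin n))),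
        ((0 : EuclideanSpace ℝ (Fin m)), (y0 : EuclideanSpace ℝ (Fin n)))})
    (hb0 : i (Quot.mk _ (Sum.inl ⟨0, hAB h0A⟩)) = (0, 0))
    (hy0im : i (Quot.mk _ (Sum.inr (Sum.inr y0)))
      = ((0 : EuclideanSpace ℝ (Fin m)), (y0 : EuclideanSpace ℝ (Fin n)))) :
    Nonempty
      ((↥(Set.range i ∪
          segment ℝ (0, 0) ((0 : EuclideanSpace ℝ (Fin m)),
            (y0 : EuclideanSpace ℝ (Fin n)))))
        ≃ₜ Quot (doubleCylRel hAB ⇑f)) := by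
  classical
  have hy0v : (y0 : EuclideanSpace ℝ (Fin n)) ≠ 0 := by
    intro h0
    have e1 : i (Quot.mk _ (Sum.inl (⟨0, hAB h0A⟩ : B))) = i (Quot.mk _ (Sum.inr (Sum.inr y0))) := by
      rw [hb0, hy0im, h0]
    have e2 := hi.injective e1
    have e3 := congrArg (Quot.lift AttachSegAux.ht (AttachSegAux.ht_resp hA'B f')) e2
    simpa [AttachSegAux.ht] using e3
  have hsegmem : ∀ t : ℝ, 0 ≤ t → t ≤ 1 →
      ((0 : EuclideanSpace ℝ (Fin m)), t • (y0 : EuclideanSpace ℝ (Fin n))) ∈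
        segment ℝ ((0 : EuclideanSpace ℝ (Fin m)), (0 : EuclideanSpace ℝ (Fin n)))
          ((0 : EuclideanSpace ℝ (Fin m)), (y0 : EuclideanSpace ℝ (Fin n))) := by
    intro t h0 h1
    rw [segment_eq_image]
    refine ⟨t, ⟨h0, h1⟩, ?_⟩
    simp [Prod.smul_mk, Prod.mk_add_mk, Prod.ext_iff]
  have hsegrep : ∀ p ∈ segment ℝ ((0 : EuclideanSpace ℝ (Fin m)), (0 : EuclideanSpace ℝ (Fin n)))
      ((0 : EuclideanSpace ℝ (Fin m)), (y0 : EuclideanSpace ℝ (Fin n))),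
      ∃ t : ℝ, 0 ≤ t ∧ t ≤ 1 ∧
        p = ((0 : EuclideanSpace ℝ (Fin m)), t • (y0 : EuclideanSpace ℝ (Fin n))) := by
    intro p hp
    rw [segment_eq_image] at hp
    obtain ⟨t, ⟨h0, h1⟩, hp⟩ := hp
    refine ⟨t, h0, h1, ?_⟩
    rw [← hp]
    simp [Prod.smul_mk, Prod.mk_add_mk, Prod.ext_iff]
  by_cases hiso : ∃ ε > 0, ∀ x ∈ A, ‖x‖ < ε → x = (0 : EuclideanSpace ℝ (Fin m))
  · -- `0` is isolated in `A`: build the homeomorphism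
    obtain ⟨ε, hε, hεA⟩ := hiso
    have resp := AttachSegAux.gfun_resp h0A hAB hA'B (⇑f) f' i y0 hf0 hf' hb0 hy0im
    let G : Quot (doubleCylRel hAB ⇑f) → EuclideanSpace ℝ (Fin m) × EuclideanSpace ℝ (Fin n) :=
      Quot.lift (AttachSegAux.gfun hA'B f' i y0) resp
    let j : Quot (doubleCylRel hA'B f') → Quot (doubleCylRel hAB ⇑f) :=
      AttachSegAux.jQ hAB hA'B (⇑f) f' hf'
    have hjb : ∀ b : B, j (Quot.mk _ (Sum.inl b)) = Quot.mk _ (Sum.inl b) := fun _ => rfl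
    have hjy : ∀ y : Y, j (Quot.mk _ (Sum.inr (Sum.inr y))) = Quot.mk _ (Sum.inr (Sum.inr y)) :=
      fun _ => rfl
    have hja : ∀ p : (A \ {0} : Set (EuclideanSpace ℝ (Fin m))) × unitInterval,
        j (Quot.mk _ (Sum.inr (Sum.inl p)))
          = Quot.mk _ (Sum.inr (Sum.inl ((⟨p.1.1, p.1.2.1⟩ : A), p.2))) := fun _ => rfl
    have hGseg : ∀ t : unitInterval,
        G (Quot.mk _ (Sum.inr (Sum.inl (⟨0, h0A⟩, t))))
          = ((0 : EuclideanSpace ℝ (Fin m)), (t : ℝ) • (y0 : EuclideanSpace ℝ (Fin n))) := by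
      intro t
      exact dif_pos rfl
    have hGj : ∀ z, G (j z) = i z := by
      apply Quot.ind
      rintro (b | ⟨a', t⟩ | y)
      · rfl
      · rw [hja]
        exact dif_neg a'.2.2
      · rfl
    have hcover : ∀ x : Quot (doubleCylRel hAB ⇑f),
        (∃ z, j z = x) ∨ ∃ t : unitInterval,
          x = Quot.mk _ (Sum.inr (Sum.inl (⟨0, h0A⟩, t))) := by
      apply Quot.ind
      rintro (b | ⟨a, t⟩ | y)
      · exact Or.inl ⟨Quot.mk _ (Sum.inl b), rfl⟩
      · by_cases ha : (a : EuclideanSpace ℝ (Fin m)) = 0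
        · refine Or.inr ⟨t, ?_⟩
          have : a = ⟨0, h0A⟩ := Subtype.ext ha
          rw [this]
        · refine Or.inl ⟨Quot.mk _ (Sum.inr (Sum.inl (⟨a.1, a.2, ha⟩, t))), ?_⟩
          rw [hja]
      · exact Or.inl ⟨Quot.mk _ (Sum.inr (Sum.inr y)), rfl⟩
    have hrange : ∀ x, G x ∈ Set.range i ∪
        segment ℝ ((0 : EuclideanSpace ℝ (Fin m)), (0 : EuclideanSpace ℝ (Fin n)))
          ((0 : EuclideanSpace ℝ (Fin m)), (y0 : EuclideanSpace ℝ (Fin n))) := by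
      intro x
      rcases hcover x with ⟨z, rfl⟩ | ⟨t, rfl⟩
      · rw [hGj]; exact Or.inl ⟨z, rfl⟩
      · rw [hGseg]; exact Or.inr (hsegmem t t.2.1 t.2.2)
    have hkey : ∀ (z : Quot (doubleCylRel hA'B f')) (t : unitInterval),
        i z = ((0 : EuclideanSpace ℝ (Fin m)), (t : ℝ) • (y0 : EuclideanSpace ℝ (Fin n))) →
          j z = Quot.mk _ (Sum.inr (Sum.inl (⟨0, h0A⟩, t))) := by
      intro z t hz
      have hmem := hmeet ⟨⟨z, hz⟩, hsegmem t t.2.1 t.2.2⟩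
      rcases hmem with h | h
      · have ht0 : (t : ℝ) • (y0 : EuclideanSpace ℝ (Fin n)) = 0 := by
          have := congrArg Prod.snd h; simpa using this
        have htr : (t : ℝ) = 0 := by
          rcases smul_eq_zero.1 ht0 with h' | h'
          · exact h'
          · exact absurd h' hy0v
        have ht : t = 0 := Subtype.ext htr
        subst ht
        have hz' : z = Quot.mk _ (Sum.inl (⟨0, hAB h0A⟩ : B)) := by
          apply hi.injective
          rw [hz, hb0]
          norm_num
        rw [hz', hjb]
        exact Quot.sound (Or.inl ⟨⟨0, h0A⟩, rfl, rfl⟩)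
      · have ht1 : (t : ℝ) • (y0 : EuclideanSpace ℝ (Fin n)) = (y0 : EuclideanSpace ℝ (Fin n)) := by
          have := congrArg Prod.snd h; simpa using this
        have htr : (t : ℝ) = 1 := by
          have hsub : ((t : ℝ) - 1) • (y0 : EuclideanSpace ℝ (Fin n)) = 0 := by
            rw [sub_smul, one_smul, ht1, sub_self]
          rcases smul_eq_zero.1 hsub with h' | h'
          · linarith
          · exact absurd h' hy0v
        have ht : t = 1 := Subtype.ext htr
        subst ht
        have hz' : z = Quot.mk _ (Sum.inr (Sum.inr y0)) := by
          apply hi.injective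
          rw [hz, hy0im]
          norm_num
        rw [hz', hjy]
        refine (Quot.sound ?_).symm
        exact Or.inr ⟨⟨0, h0A⟩, rfl, by rw [hf0]⟩
    have hinj : Function.Injective G := by
      intro x y hxy
      rcases hcover x with ⟨z1, rfl⟩ | ⟨t1, rfl⟩ <;> rcases hcover y with ⟨z2, rfl⟩ | ⟨t2, rfl⟩
      · rw [hGj, hGj] at hxy
        rw [hi.injective hxy]
      · rw [hGj, hGseg] at hxy
        exact hkey z1 t2 hxy
      · rw [hGseg, hGj] at hxy
        exact (hkey z2 t1 hxy.symm).symm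
      · rw [hGseg, hGseg] at hxy
        have h2 : (t1 : ℝ) • (y0 : EuclideanSpace ℝ (Fin n))
            = (t2 : ℝ) • (y0 : EuclideanSpace ℝ (Fin n)) := by
          have := congrArg Prod.snd hxy; simpa using this
        have h3 : ((t1 : ℝ) - (t2 : ℝ)) • (y0 : EuclideanSpace ℝ (Fin n)) = 0 := by
          rw [sub_smul, h2, sub_self]
        rcases smul_eq_zero.1 h3 with h' | h'
        · have : t1 = t2 := Subtype.ext (by linarith)
          rw [this]
        · exact absurd h' hy0v
    have hsurj : ∀ p : ↥(Set.range i ∪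
        segment ℝ ((0 : EuclideanSpace ℝ (Fin m)), (0 : EuclideanSpace ℝ (Fin n)))
          ((0 : EuclideanSpace ℝ (Fin m)), (y0 : EuclideanSpace ℝ (Fin n)))),
        ∃ x, G x = (p : EuclideanSpace ℝ (Fin m) × EuclideanSpace ℝ (Fin n)) := by
      rintro ⟨p, hp | hp⟩
      · obtain ⟨z, rfl⟩ := hp
        exact ⟨j z, hGj z⟩
      · obtain ⟨t, h0, h1, rfl⟩ := hsegrep p hp
        exact ⟨Quot.mk _ (Sum.inr (Sum.inl (⟨0, h0A⟩, ⟨t, h0, h1⟩))), hGseg ⟨t, h0, h1⟩⟩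
    haveI : CompactSpace B := isCompact_iff_compactSpace.1 hB
    haveI : CompactSpace A := isCompact_iff_compactSpace.1 hA
    haveI : CompactSpace Y := isCompact_iff_compactSpace.1 hY
    haveI : CompactSpace (Quot (doubleCylRel hAB ⇑f)) := by
      constructor
      have hsur : Function.Surjective (Quot.mk (doubleCylRel hAB ⇑f)) := fun q => Quot.exists_rep q
      rw [← Set.range_eq_univ.2 hsur]
      exact isCompact_range continuous_quot_mk
    have hGcont : Continuous G :=
      continuous_quot_lift _ (AttachSegAux.gfun_cont hA'B f' i y0 hi.continuous ε hε hεA)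
    let E : Quot (doubleCylRel hAB ⇑f) ≃ ↥(Set.range i ∪
        segment ℝ ((0 : EuclideanSpace ℝ (Fin m)), (0 : EuclideanSpace ℝ (Fin n)))
          ((0 : EuclideanSpace ℝ (Fin m)), (y0 : EuclideanSpace ℝ (Fin n)))) :=
      Equiv.ofBijective (fun x => ⟨G x, hrange x⟩)
        ⟨fun x y h => hinj (congrArg Subtype.val h),
         fun p => by obtain ⟨x, hx⟩ := hsurj p; exact ⟨x, Subtype.ext hx⟩⟩
    exact ⟨(Continuous.homeoOfEquivCompactToT2 (f := E) (hGcont.subtype_mk _)).symm⟩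
  · -- `0` is not isolated in `A`: contradiction with `i` being an embedding
    exfalso
    push_neg at hiso
    have hseq : ∀ k : ℕ, ∃ x, x ∈ A ∧ ‖x‖ < 1 / (k + 1) ∧ x ≠ 0 := by
      intro k
      obtain ⟨x, hx1, hx2, hx3⟩ := hiso (1 / (k + 1)) (by positivity)
      exact ⟨x, hx1, hx2, hx3⟩
    choose a haA hanorm hane using hseq
    have hrpos : ∀ k, 0 < ‖a k‖ := fun k => norm_pos_iff.2 (hane k)
    have hr0 : Filter.Tendsto (fun k => ‖a k‖) Filter.atTop (nhds 0) :=
      squeeze_zero (fun k => norm_nonneg _) (fun k => (hanorm k).le)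
        tendsto_one_div_add_atTop_nhds_zero_nat
    let ck : ℕ → unitInterval → Quot (doubleCylRel hA'B f') :=
      fun k s => Quot.mk _ (Sum.inr (Sum.inl (⟨a k, haA k, hane k⟩, s)))
    have hccont : ∀ k, Continuous fun s : unitInterval => i (ck k s) := fun k =>
      hi.continuous.comp (continuous_quot_mk.comp (continuous_inr.comp
        (continuous_inl.comp (continuous_const.prodMk continuous_id))))
    have hsex : ∀ k : ℕ, ∃ s : unitInterval, 0 < (s : ℝ) ∧ (s : ℝ) ≤ 1 / 2 ∧
        dist (i (ck k s)) (i (ck k 0)) < 1 / (k + 1) := by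
      intro k
      obtain ⟨δ, hδ, hcont⟩ := Metric.continuousAt_iff.1
        ((hccont k).continuousAt (x := (0 : unitInterval))) (1 / (k + 1)) (by positivity)
      have hs0pos : (0 : ℝ) < min (δ / 2) (1 / 2) := lt_min (by linarith) (by norm_num)
      have hs0le : min (δ / 2) (1 / 2) ≤ 1 / 2 := min_le_right _ _
      have hs0mem : min (δ / 2) (1 / 2) ∈ unitInterval := ⟨hs0pos.le, by linarith⟩
      refine ⟨⟨min (δ / 2) (1 / 2), hs0mem⟩, hs0pos, hs0le, hcont ?_⟩
      have hd : dist (⟨min (δ / 2) (1 / 2), hs0mem⟩ : unitInterval) (0 : unitInterval)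
          = min (δ / 2) (1 / 2) := by
        rw [Subtype.dist_eq, Real.dist_eq]
        norm_num [abs_of_nonneg hs0pos.le]
      rw [hd]
      calc min (δ / 2) (1 / 2) ≤ δ / 2 := min_le_left _ _
        _ < δ := by linarith
    choose s hspos hshalf hsdist using hsex
    have hc0 : ∀ k, i (ck k 0)
        = i (Quot.mk _ (Sum.inl (⟨a k, hA'B ⟨haA k, hane k⟩⟩ : B))) := by
      intro k
      exact (congrArg i (Quot.sound (Or.inl ⟨⟨a k, haA k, hane k⟩, rfl, rfl⟩))).symm
    have h1 : Filter.Tendsto (fun k => (⟨a k, hA'B ⟨haA k, hane k⟩⟩ : B)) Filter.atTop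
        (nhds (⟨0, hAB h0A⟩ : B)) := by
      rw [tendsto_subtype_rng]
      exact tendsto_zero_iff_norm_tendsto_zero.2 hr0
    have h2 : Filter.Tendsto (fun k => i (Quot.mk _ (Sum.inl (⟨a k, hA'B ⟨haA k, hane k⟩⟩ : B))))
        Filter.atTop (nhds ((0, 0) : EuclideanSpace ℝ (Fin m) × EuclideanSpace ℝ (Fin n))) := by
      have hco : Continuous fun b : B => i (Quot.mk _ (Sum.inl b)) :=
        hi.continuous.comp (continuous_quot_mk.comp continuous_inl)
      have h3 := (hco.tendsto (⟨0, hAB h0A⟩ : B)).comp h1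
      simpa [Function.comp_def, hb0] using h3
    have hx : Filter.Tendsto (fun k => i (ck k (s k))) Filter.atTop
        (nhds ((0, 0) : EuclideanSpace ℝ (Fin m) × EuclideanSpace ℝ (Fin n))) := by
      rw [tendsto_iff_dist_tendsto_zero]
      have hbnd : ∀ k, dist (i (ck k (s k)))
          ((0, 0) : EuclideanSpace ℝ (Fin m) × EuclideanSpace ℝ (Fin n))
          ≤ 1 / (k + 1) + dist (i (ck k 0))
            ((0, 0) : EuclideanSpace ℝ (Fin m) × EuclideanSpace ℝ (Fin n)) := by
        intro k
        calc dist (i (ck k (s k))) ((0, 0) : EuclideanSpace ℝ (Fin m) × EuclideanSpace ℝ (Fin n))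
            ≤ dist (i (ck k (s k))) (i (ck k 0)) + dist (i (ck k 0)) ((0, 0) :
              EuclideanSpace ℝ (Fin m) × EuclideanSpace ℝ (Fin n)) := dist_triangle _ _ _
          _ ≤ _ := add_le_add_left (hsdist k).le _
      apply squeeze_zero (fun k => dist_nonneg) hbnd
      have h4 : Filter.Tendsto (fun k => dist (i (ck k 0))
          ((0, 0) : EuclideanSpace ℝ (Fin m) × EuclideanSpace ℝ (Fin n))) Filter.atTop (nhds 0) := by
        apply tendsto_iff_dist_tendsto_zero.1
        exact h2.congr (fun k => (hc0 k).symm)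
      simpa using tendsto_one_div_add_atTop_nhds_zero_nat.add h4
    have hxz : Filter.Tendsto (fun k => ck k (s k)) Filter.atTop
        (nhds (Quot.mk _ (Sum.inl (⟨0, hAB h0A⟩ : B)))) := by
      apply hi.toIsInducing.tendsto_nhds_iff.2
      rw [hb0]
      exact hx
    obtain ⟨w, hwcont, hwpos, hwle⟩ := AttachSegAux.exists_wfun (fun k => ‖a k‖)
      (fun k => (s k : ℝ)) hr0 (fun k => hspos k)
    have hwne : ∀ x : (A \ {0} : Set (EuclideanSpace ℝ (Fin m))),
        w ‖(x : EuclideanSpace ℝ (Fin m))‖ ≠ 0 :=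
      fun x => ne_of_gt (hwpos _ (norm_pos_iff.2 x.2.2))
    let F : Quot (doubleCylRel hA'B f') → ℝ :=
      Quot.lift (AttachSegAux.Fsum (A := A) (B := B) (Y := Y) w)
        (AttachSegAux.Fsum_resp w hA'B f')
    have hFcont : Continuous F :=
      continuous_quot_lift _ (AttachSegAux.Fsum_cont w hwcont hwne)
    have hF1 : ∀ k, F (ck k (s k)) = 1 := by
      intro k
      show AttachSegAux.Fsum w (Sum.inr (Sum.inl (⟨a k, haA k, hane k⟩, s k))) = 1
      have e1 : min ((s k : ℝ) / w ‖a k‖) 1 = 1 :=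
        min_eq_right ((one_le_div (hwpos _ (hrpos k))).2 (hwle k))
      have e2 : min (2 * (1 - (s k : ℝ))) 1 = 1 := min_eq_right (by linarith [hshalf k])
      simp only [AttachSegAux.Fsum, AttachSegAux.bump, Sum.elim_inr, Sum.elim_inl]
      rw [e1, e2]
      norm_num
    have hlim : Filter.Tendsto (fun k => F (ck k (s k))) Filter.atTop (nhds 0) := by
      have h5 := (hFcont.tendsto (Quot.mk _ (Sum.inl (⟨0, hAB h0A⟩ : B)))).comp hxz
      have h6 : F (Quot.mk _ (Sum.inl (⟨0, hAB h0A⟩ : B))) = 0 := rfl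
      rw [h6] at h5
      exact h5
    have hcontra : (1 : ℝ) = 0 := by
      refine tendsto_nhds_unique ?_ hlim
      exact tendsto_const_nhds.congr (fun k => (hF1 k).symm)
    norm_num at hcontra
end
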